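/- arXiv:1104.4583 — 4 statements merged into one kernel-verified Lean document; each statement's English description precedes it below -/
import Mathlib

section
/- Let K be a field with a nonarchimedean valuation v and valuation ring O_K, let p be a prime and g ≥ 1 an integer. Suppose that for each i ∈ Z/gZ we are given nonzero elements a_i, b_i, u_i ∈ O_K satisfying a_i·u_i = b_i·u_{i-1}^p. Then for every i ∈ Z/gZ one has ∑_{j=0}^{g-1} p^j·v(a_{i-j}) ≥ ∑_{j=0}^{g-1} p^j·v(b_{i-j}); moreover, equality holds for all i if and only if v(u_i) = 0 for all i ∈ Z/gZ. -/
/-- Comparison of weighted sums of valuations for Raynaud-type data: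
if `a i * u i = b i * u (i-1) ^ p` with all elements in the valuation ring,
then `∑ pʲ v(a_{i-j}) ≥ ∑ pʲ v(b_{i-j})`, with equality for all `i` iff all
`v (u i) = 0`. -/
theorem stmt_0 {K : Type*} [Field K] (v : K → ℝ)
    (hmul : ∀ x y : K, x ≠ 0 → y ≠ 0 → v (x * y) = v x + v y)
    (hultra : ∀ x y : K, x ≠ 0 → y ≠ 0 → x + y ≠ 0 → min (v x) (v y) ≤ v (x + y))
    (p g : ℕ) (hp : p.Prime) (hg : 1 ≤ g)
    (a b u : ZMod g → K)
    (ha : ∀ i, a i ≠ 0) (hb : ∀ i, b i ≠ 0) (hu : ∀ i, u i ≠ 0)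
    (haO : ∀ i, 0 ≤ v (a i)) (hbO : ∀ i, 0 ≤ v (b i)) (huO : ∀ i, 0 ≤ v (u i))
    (hrel : ∀ i : ZMod g, a i * u i = b i * u (i - 1) ^ p) :
    (∀ i : ZMod g,
      ∑ j ∈ Finset.range g, (p : ℝ) ^ j * v (b (i - (j : ZMod g)))
        ≤ ∑ j ∈ Finset.range g, (p : ℝ) ^ j * v (a (i - (j : ZMod g)))) ∧
    ((∀ i : ZMod g,
        ∑ j ∈ Finset.range g, (p : ℝ) ^ j * v (a (i - (j : ZMod g)))
          = ∑ j ∈ Finset.range g, (p : ℝ) ^ j * v (b (i - (j : ZMod g))))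
      ↔ ∀ i : ZMod g, v (u i) = 0) := by
  have h1 : v 1 = 0 := by
    have := hmul 1 1 one_ne_zero one_ne_zero
    simp only [mul_one] at this
    linarith
  have hpow : ∀ (x : K), x ≠ 0 → ∀ n : ℕ, v (x ^ n) = n * v x := by
    intro x hx n
    induction n with
    | zero => simpa using h1
    | succ n ih =>
      rw [pow_succ, hmul _ _ (pow_ne_zero n hx) hx, ih]
      push_cast; ring
  have key : ∀ i : ZMod g, v (a i) - v (b i) = p * v (u (i - 1)) - v (u i) := by
    intro i
    have h1' := hmul (a i) (u i) (ha i) (hu i)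
    have h2 := hmul (b i) (u (i - 1) ^ p) (hb i) (pow_ne_zero p (hu _))
    rw [hrel i] at h1'
    rw [hpow _ (hu _) p] at h2
    linarith [h1'.symm.trans h2]
  have tel : ∀ i : ZMod g,
      (∑ j ∈ Finset.range g, (p : ℝ) ^ j * v (a (i - (j : ZMod g)))) -
      (∑ j ∈ Finset.range g, (p : ℝ) ^ j * v (b (i - (j : ZMod g))))
      = ((p : ℝ) ^ g - 1) * v (u i) := by
    intro i
    rw [← Finset.sum_sub_distrib]
    have hcongr : ∀ j ∈ Finset.range g,
        (p : ℝ) ^ j * v (a (i - (j : ZMod g))) - (p : ℝ) ^ j * v (b (i - (j : ZMod g)))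
        = (p : ℝ) ^ (j + 1) * v (u (i - ((j + 1 : ℕ) : ZMod g)))
          - (p : ℝ) ^ j * v (u (i - (j : ZMod g))) := by
      intro j _
      have hcast : i - ((j + 1 : ℕ) : ZMod g) = (i - (j : ZMod g)) - 1 := by
        push_cast; ring
      rw [hcast, ← mul_sub, key (i - (j : ZMod g))]
      ring
    rw [Finset.sum_congr rfl hcongr,
      Finset.sum_range_sub (fun j => (p : ℝ) ^ j * v (u (i - (j : ZMod g))))]
    simp [ZMod.natCast_self]
    ring
  have hpg : (1 : ℝ) < (p : ℝ) ^ g := by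
    have : (1 : ℝ) < (p : ℝ) := by exact_mod_cast hp.one_lt
    exact one_lt_pow₀ this (by omega)
  constructor
  · intro i
    have := tel i
    nlinarith [huO i]
  · constructor
    · intro h i
      have h0 := tel i
      rw [h i] at h0
      have : ((p : ℝ) ^ g - 1) * v (u i) = 0 := by linarith
      rcases mul_eq_zero.mp this with h' | h'
      · linarith
      · exact h'
    · intro h i
      have := tel i
      rw [h i] at this
      linarith
end

section
/- Let k be a field of characteristic p > 0 and R = k⟦u⟧. Let g ≥ 1; for each i ∈ Z/gZ let c_i, d_i, b_i ∈ R, let â_i ∈ R^× be a unit, and let s_i ≥ 1 and r_i ≥ 1 be integers. Define g_i(z) = (c_i + u^{s_i}·d_i·z^p) / (â_i + u^{r_i}·b_i·z^p) for z ∈ R (the denominator is a unit in R for every z ∈ R). Then there exists a unique tuple (z_i)_{i ∈ Z/gZ} in R satisfying z_i = g_i(z_{i-1}) for all i ∈ Z/gZ. -/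
open PowerSeries

section Aux

variable {k : Type*} [Field k]

/-- Auxiliary: the map `w ↦ (c + X^s d w^p) * (a + X^r b w^p)⁻¹`. -/
private noncomputable def Gmap (c d b : PowerSeries k) (a : (PowerSeries k)ˣ) (s r p : ℕ)
    (w : PowerSeries k) : PowerSeries k :=
  (c + X ^ s * d * w ^ p) * ((a : PowerSeries k) + X ^ r * b * w ^ p)⁻¹

private lemma constCoeff_denom_ne_zero (b : PowerSeries k) (a : (PowerSeries k)ˣ)
    {r p : ℕ} (hr : 1 ≤ r) (w : PowerSeries k) :
    constantCoeff ((a : PowerSeries k) + X ^ r * b * w ^ p) ≠ 0 := by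
  have ha : IsUnit (constantCoeff (a : PowerSeries k)) :=
    (Units.map (constantCoeff (R := k)).toMonoidHom a).isUnit
  have h0 : constantCoeff ((X : PowerSeries k) ^ r * b * w ^ p) = 0 := by
    simp [map_mul, PowerSeries.constantCoeff_X, zero_pow (by omega : r ≠ 0)]
  rw [map_add, h0, add_zero]
  exact ha.ne_zero

private lemma Gmap_contract (c d b : PowerSeries k) (a : (PowerSeries k)ˣ)
    {s r p : ℕ} (hs : 1 ≤ s) (hr : 1 ≤ r) (hp : 0 < p) [CharP k p]
    {n : ℕ} {w w' : PowerSeries k} (h : (X : PowerSeries k) ^ n ∣ w - w') :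
    (X : PowerSeries k) ^ (n + 1) ∣ Gmap c d b a s r p w - Gmap c d b a s r p w' := by
  haveI : CharP (PowerSeries k) p :=
    charP_of_injective_algebraMap (algebraMap k (PowerSeries k)).injective p
  haveI : NeZero p := ⟨hp.ne'⟩
  haveI : Fact p.Prime := CharP.char_is_prime_of_pos (PowerSeries k) p
  set A := (a : PowerSeries k) + X ^ r * b * w ^ p with hA
  set A' := (a : PowerSeries k) + X ^ r * b * w' ^ p with hA'
  have hAc : constantCoeff A ≠ 0 := constCoeff_denom_ne_zero b a hr w
  have hA'c : constantCoeff A' ≠ 0 := constCoeff_denom_ne_zero b a hr w'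
  have hAu : IsUnit A := by
    rw [PowerSeries.isUnit_iff_constantCoeff]; exact isUnit_iff_ne_zero.2 hAc
  have hA'u : IsUnit A' := by
    rw [PowerSeries.isUnit_iff_constantCoeff]; exact isUnit_iff_ne_zero.2 hA'c
  have key : (Gmap c d b a s r p w - Gmap c d b a s r p w') * (A * A') =
      (w - w') ^ p * (X ^ s * d * (a : PowerSeries k) - X ^ r * b * c) := by
    have hw : w ^ p - w' ^ p = (w - w') ^ p := (sub_pow_char _ _).symm
    have e1 : A⁻¹ * A = 1 := PowerSeries.inv_mul_cancel A hAc
    have e2 : A'⁻¹ * A' = 1 := PowerSeries.inv_mul_cancel A' hA'c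
    calc (Gmap c d b a s r p w - Gmap c d b a s r p w') * (A * A')
        = (c + X ^ s * d * w ^ p) * (A⁻¹ * A) * A' -
          (c + X ^ s * d * w' ^ p) * (A'⁻¹ * A') * A := by
          unfold Gmap; rw [← hA, ← hA']; ring
      _ = (c + X ^ s * d * w ^ p) * A' - (c + X ^ s * d * w' ^ p) * A := by
          rw [e1, e2]; ring
      _ = (w ^ p - w' ^ p) * (X ^ s * d * (a : PowerSeries k) - X ^ r * b * c) := by
          rw [hA, hA']; ring
      _ = (w - w') ^ p * (X ^ s * d * (a : PowerSeries k) - X ^ r * b * c) := by rw [hw]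
  have hdvd : (X : PowerSeries k) ^ (n + 1) ∣
      (Gmap c d b a s r p w - Gmap c d b a s r p w') * (A * A') := by
    rw [key]
    have h1 : (X : PowerSeries k) ^ (n * p) ∣ (w - w') ^ p := by
      rw [pow_mul]; exact pow_dvd_pow_of_dvd h p
    have h2 : (X : PowerSeries k) ^ 1 ∣
        (X ^ s * d * (a : PowerSeries k) - X ^ r * b * c) := by
      apply dvd_sub
      · exact Dvd.dvd.mul_right (Dvd.dvd.mul_right (pow_dvd_pow _ hs) _) _
      · exact Dvd.dvd.mul_right (Dvd.dvd.mul_right (pow_dvd_pow _ hr) _) _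
    have := mul_dvd_mul h1 h2
    rw [← pow_add] at this
    exact dvd_trans (pow_dvd_pow _ (by nlinarith : n + 1 ≤ n * p + 1)) this
  exact ((hAu.mul hA'u).dvd_mul_right).mp hdvd

private lemma eq_of_forall_pow_dvd {f g : PowerSeries k}
    (h : ∀ n, (X : PowerSeries k) ^ n ∣ f - g) : f = g := by
  rw [← sub_eq_zero]
  ext n
  have := (PowerSeries.X_pow_dvd_iff.mp (h (n + 1))) n (Nat.lt_succ_self n)
  simpa using this

end Aux

/-- The system `z i = (c i + u^{s i} d i z_{i-1}^p) / (â i + u^{r i} b i z_{i-1}^p)`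
in `k⟦u⟧` has a unique solution. -/
theorem stmt_2 {k : Type*} [Field k] (p : ℕ) (hp : 0 < p) [CharP k p]
    (g : ℕ) (hg : 1 ≤ g)
    (c d b : ZMod g → PowerSeries k) (aU : ZMod g → (PowerSeries k)ˣ)
    (s r : ZMod g → ℕ) (hs : ∀ i, 1 ≤ s i) (hr : ∀ i, 1 ≤ r i) :
    ∃! z : ZMod g → PowerSeries k, ∀ i : ZMod g,
      z i = (c i + (PowerSeries.X) ^ (s i) * d i * (z (i - 1)) ^ p)
              * ((aU i : PowerSeries k) + (PowerSeries.X) ^ (r i) * b i * (z (i - 1)) ^ p)⁻¹ := by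
  classical
  -- The iteration map
  set F : (ZMod g → PowerSeries k) → (ZMod g → PowerSeries k) :=
    fun z i => Gmap (c i) (d i) (b i) (aU i) (s i) (r i) p (z (i - 1)) with hF
  have hFfix : ∀ z : ZMod g → PowerSeries k,
      (∀ i : ZMod g, z i = (c i + (PowerSeries.X) ^ (s i) * d i * (z (i - 1)) ^ p)
        * ((aU i : PowerSeries k) + (PowerSeries.X) ^ (r i) * b i * (z (i - 1)) ^ p)⁻¹)
      ↔ F z = z := by
    intro z
    constructor
    · intro h; funext i; exact (h i).symm
    · intro h i; exact (congrFun h i).symm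
  -- Contraction property
  have contract : ∀ (n : ℕ) (z z' : ZMod g → PowerSeries k),
      (∀ i, (X : PowerSeries k) ^ n ∣ z i - z' i) →
      (∀ i, (X : PowerSeries k) ^ (n + 1) ∣ F z i - F z' i) := by
    intro n z z' h i
    exact Gmap_contract (c i) (d i) (b i) (aU i) (hs i) (hr i) hp (h (i - 1))
  -- Iterates
  set zs : ℕ → ZMod g → PowerSeries k := fun m => F^[m] 0 with hzs
  have hzs_succ : ∀ m, zs (m + 1) = F (zs m) := by
    intro m; rw [hzs]; simp [Function.iterate_succ_apply']
  have hstep : ∀ m i, (X : PowerSeries k) ^ m ∣ zs (m + 1) i - zs m i := by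
    intro m
    induction m with
    | zero => intro i; simpa using one_dvd _
    | succ m ih =>
        intro i
        have h := contract m (zs (m+1)) (zs m) ih i
        rwa [← hzs_succ (m+1), ← hzs_succ m] at h
  have hcauchy : ∀ m j i, (X : PowerSeries k) ^ m ∣ zs (m + j) i - zs m i := by
    intro m j
    induction j with
    | zero => intro i; simp
    | succ j ih =>
        intro i
        have h1 : (X : PowerSeries k) ^ m ∣ zs (m + j + 1) i - zs (m + j) i :=
          dvd_trans (pow_dvd_pow _ (Nat.le_add_right m j)) (hstep (m + j) i)
        have := dvd_add h1 (ih i)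
        rw [sub_add_sub_cancel] at this
        rw [show m + (j + 1) = m + j + 1 by omega]
        exact this
  -- The limit
  set z : ZMod g → PowerSeries k :=
    fun i => PowerSeries.mk (fun n => PowerSeries.coeff n (zs (n + 1) i)) with hz
  have hlim : ∀ m i, (X : PowerSeries k) ^ m ∣ z i - zs m i := by
    intro m i
    rw [PowerSeries.X_pow_dvd_iff]
    intro n hn
    rw [map_sub, sub_eq_zero]
    have hzc : PowerSeries.coeff n (z i) = PowerSeries.coeff n (zs (n + 1) i) := by
      rw [hz]; simp
    rw [hzc]
    obtain ⟨j, hj⟩ : ∃ j, m = (n + 1) + j := ⟨m - (n + 1), by omega⟩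
    have := hcauchy (n + 1) j i
    rw [← hj] at this
    have hc := (PowerSeries.X_pow_dvd_iff.mp this) n (Nat.lt_succ_self n)
    rw [map_sub, sub_eq_zero] at hc
    exact hc.symm
  -- z is a fixed point
  have hfix : F z = z := by
    funext i
    apply eq_of_forall_pow_dvd
    intro m
    have h1 : (X : PowerSeries k) ^ (m + 1) ∣ F z i - zs (m + 1) i := by
      rw [hzs_succ m]
      exact contract m z (zs m) (fun j => hlim m j) i
    have h2 : (X : PowerSeries k) ^ (m + 1) ∣ z i - zs (m + 1) i := hlim (m + 1) i
    have h3 : (X : PowerSeries k) ^ (m + 1) ∣ F z i - z i := by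
      have := dvd_sub h1 h2
      simpa using this
    exact dvd_trans (pow_dvd_pow _ (Nat.le_succ m)) h3
  refine ⟨z, (hFfix z).mpr hfix, ?_⟩
  intro y hy
  have hyfix : F y = y := (hFfix y).mp hy
  have hdvd : ∀ n i, (X : PowerSeries k) ^ n ∣ y i - z i := by
    intro n
    induction n with
    | zero => intro i; simpa using one_dvd _
    | succ n ih =>
        intro i
        have := contract n y z ih i
        rwa [hyfix, hfix] at this
  funext i
  exact eq_of_forall_pow_dvd (fun n => hdvd n i)
end

section
/- Let k be a field of characteristic p > 0 and R = k⟦u⟧. Let c₁, c₂, â ∈ R^× be units and let m ≥ 1 be an integer. Then there exists a unique pair (y₁, y₂) ∈ R × R satisfying the two equations (â + u^m·y₁^p)·y₂ = c₂ and y₁·y₂^p = c₁; moreover both y₁ and y₂ are units of R. -/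
open PowerSeries

private lemma ps_zero_of_forall_dvd {k : Type*} [Field k] (f : PowerSeries k)
    (h : ∀ n : ℕ, (PowerSeries.X : PowerSeries k) ^ n ∣ f) : f = 0 := by
  ext n
  have := (PowerSeries.X_pow_dvd_iff).1 (h (n + 1)) n (by omega)
  simpa using this

/-- The system `(â + u^m y₁^p) y₂ = c₂`, `y₁ y₂^p = c₁` in `k⟦u⟧` has a unique
solution, and both components are units. -/
theorem stmt_4 {k : Type*} [Field k] (p : ℕ) (hp : 0 < p) [CharP k p]
    (c₁ c₂ a0 : (PowerSeries k)ˣ) (m : ℕ) (hm : 1 ≤ m) :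
    (∃! yp : PowerSeries k × PowerSeries k,
      ((a0 : PowerSeries k) + PowerSeries.X ^ m * yp.1 ^ p) * yp.2 = (c₂ : PowerSeries k) ∧
      yp.1 * yp.2 ^ p = (c₁ : PowerSeries k)) ∧
    (∀ y₁ y₂ : PowerSeries k,
      ((a0 : PowerSeries k) + PowerSeries.X ^ m * y₁ ^ p) * y₂ = (c₂ : PowerSeries k) →
      y₁ * y₂ ^ p = (c₁ : PowerSeries k) →
      IsUnit y₁ ∧ IsUnit y₂) := by
  set R := PowerSeries k
  haveI : NeZero p := ⟨hp.ne'⟩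
  haveI hfact : Fact p.Prime := CharP.char_is_prime_of_pos k p
  haveI : CharP R p := charP_of_injective_algebraMap' (A := R) k p
  set d : R := (c₁ : R) * ((c₂⁻¹ : (R)ˣ) : R) ^ p with hd
  set G : R → R := fun y => d * ((a0 : R) ^ p + X ^ (m * p) * y ^ (p * p)) with hG
  -- Frobenius identity
  have hApow : ∀ w : R, ((a0 : R) + X ^ m * w ^ p) ^ p
      = (a0 : R) ^ p + X ^ (m * p) * w ^ (p * p) := by
    intro w
    rw [add_pow_char, mul_pow, ← pow_mul, ← pow_mul]
  -- contraction property
  have hcontr : ∀ (n : ℕ) (y z : R), (X : R) ^ n ∣ y - z → (X : R) ^ (n + 1) ∣ G y - G z := by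
    intro n y z ⟨t, ht⟩
    have hsub : y ^ (p * p) - z ^ (p * p) = (y - z) ^ (p * p) := by
      rw [pow_mul, pow_mul, pow_mul, ← sub_pow_char, ← sub_pow_char]
    have hGyz : G y - G z = X ^ (m * p + n * (p * p)) * (d * t ^ (p * p)) := by
      have : G y - G z = d * (X ^ (m * p) * (y ^ (p * p) - z ^ (p * p))) := by
        simp only [hG]; ring
      rw [this, hsub, ht, mul_pow, ← pow_mul, pow_add]
      ring
    rw [hGyz]
    refine Dvd.dvd.mul_right (pow_dvd_pow _ ?_) _
    have h1 : 1 * 1 ≤ m * p := Nat.mul_le_mul hm hp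
    have h2 : n * 1 ≤ n * (p * p) := Nat.mul_le_mul_left n (Nat.mul_le_mul hp hp)
    omega
  -- the iteration sequence
  set s : ℕ → R := fun n => G^[n] 0 with hs
  have hsucc : ∀ n, s (n + 1) = G (s n) := fun n => Function.iterate_succ_apply' G n 0
  have hstep : ∀ n, (X : R) ^ n ∣ s (n + 1) - s n := by
    intro n
    induction n with
    | zero => simpa using one_dvd _
    | succ n ih =>
      have := hcontr n _ _ ih
      rwa [← hsucc, ← hsucc] at this
  have hge : ∀ n j, n ≤ j → (X : R) ^ n ∣ s j - s n := by
    intro n j hnj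
    induction j, hnj using Nat.le_induction with
    | base => simp
    | succ j hj ih =>
      have h1 : (X : R) ^ n ∣ s (j + 1) - s j :=
        dvd_trans (pow_dvd_pow _ hj) (hstep j)
      have : s (j + 1) - s n = (s (j + 1) - s j) + (s j - s n) := by ring
      rw [this]; exact dvd_add h1 ih
  set y : R := PowerSeries.mk (fun j => PowerSeries.coeff j (s (j + 1))) with hy
  have happrox : ∀ n, (X : R) ^ n ∣ y - s n := by
    intro n
    rw [PowerSeries.X_pow_dvd_iff]
    intro j hj
    have h := hge (j + 1) n (by omega)
    have h2 := (PowerSeries.X_pow_dvd_iff).1 h j (by omega)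
    rw [map_sub] at h2 ⊢
    rw [hy, PowerSeries.coeff_mk]
    rw [sub_eq_zero] at h2 ⊢
    exact h2.symm
  have hfix : G y = y := by
    have hz : ∀ n : ℕ, (X : R) ^ n ∣ G y - y := by
      intro n
      have h1 := hcontr n y (s n) (happrox n)
      have h2 := happrox (n + 1)
      have he : G y - y = (G y - G (s n)) - (y - s (n + 1)) := by
        rw [hsucc]; ring
      rw [he]
      exact dvd_trans (pow_dvd_pow _ (Nat.le_succ n)) (dvd_sub h1 h2)
    exact sub_eq_zero.mp (ps_zero_of_forall_dvd _ hz)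
  have huniqfix : ∀ z : R, G z = z → z = y := by
    intro z hzf
    have key : ∀ n : ℕ, (X : R) ^ n ∣ z - y := by
      intro n
      induction n with
      | zero => simpa using one_dvd _
      | succ n ih =>
        have := hcontr n z y ih
        rwa [hzf, hfix] at this
    exact sub_eq_zero.mp (ps_zero_of_forall_dvd _ key)
  -- units
  have hA : ∀ w : R, IsUnit ((a0 : R) + X ^ m * w ^ p) := by
    intro w
    rw [PowerSeries.isUnit_iff_constantCoeff]
    have : PowerSeries.constantCoeff ((a0 : R) + X ^ m * w ^ p)
        = PowerSeries.constantCoeff (a0 : R) := by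
      rw [map_add, map_mul, map_pow, PowerSeries.constantCoeff_X,
        zero_pow (by omega : m ≠ 0), zero_mul, add_zero]
    rw [this]
    exact a0.isUnit.map _
  have h1 : ((c₂⁻¹ : (R)ˣ) : R) ^ p * ((c₂ : R)) ^ p = 1 := by
    rw [← mul_pow, Units.inv_mul, one_pow]
  obtain ⟨v, hv⟩ := hA y
  have hAne : ((a0 : R) + X ^ m * y ^ p) ≠ 0 := (hA y).ne_zero
  set y₂ : R := (c₂ : R) * ((v⁻¹ : (R)ˣ) : R) with hy₂
  have eq1 : ((a0 : R) + X ^ m * y ^ p) * y₂ = (c₂ : R) := by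
    rw [hy₂, ← hv]
    calc (v : R) * ((c₂ : R) * ((v⁻¹ : (R)ˣ) : R))
        = (c₂ : R) * ((v : R) * ((v⁻¹ : (R)ˣ) : R)) := by ring
      _ = (c₂ : R) := by rw [Units.mul_inv, mul_one]
  clear_value y₂
  have hkey : y * (c₂ : R) ^ p = (c₁ : R) * ((a0 : R) ^ p + X ^ (m * p) * y ^ (p * p)) := by
    conv_lhs => rw [← hfix]
    simp only [hG, hd]
    linear_combination ((c₁ : R) * ((a0 : R) ^ p + X ^ (m * p) * y ^ (p * p))) * h1
  have eq2 : y * y₂ ^ p = (c₁ : R) := by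
    apply mul_right_cancel₀ (pow_ne_zero p hAne)
    calc y * y₂ ^ p * ((a0 : R) + X ^ m * y ^ p) ^ p
        = y * (((a0 : R) + X ^ m * y ^ p) * y₂) ^ p := by rw [mul_pow]; ring
      _ = y * (c₂ : R) ^ p := by rw [eq1]
      _ = (c₁ : R) * ((a0 : R) ^ p + X ^ (m * p) * y ^ (p * p)) := hkey
      _ = (c₁ : R) * ((a0 : R) + X ^ m * y ^ p) ^ p := by rw [hApow]
  refine ⟨⟨(y, y₂), ⟨eq1, eq2⟩, ?_⟩, ?_⟩
  · rintro ⟨z₁, z₂⟩ ⟨hz1, hz2⟩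
    simp only at hz1 hz2
    have e1 : ((a0 : R) ^ p + X ^ (m * p) * z₁ ^ (p * p)) * z₂ ^ p = (c₂ : R) ^ p := by
      rw [← hApow z₁, ← mul_pow, hz1]
    have e2 : ((a0 : R) ^ p + X ^ (m * p) * z₁ ^ (p * p)) * (c₁ : R)
        = (c₂ : R) ^ p * z₁ := by
      linear_combination (-((a0 : R) ^ p + X ^ (m * p) * z₁ ^ (p * p))) * hz2 + z₁ * e1
    have hGz : G z₁ = z₁ := by
      simp only [hG, hd]
      linear_combination ((c₂⁻¹ : (R)ˣ) : R) ^ p * e2 + z₁ * h1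
    have hz₁y : z₁ = y := huniqfix z₁ hGz
    have hz₂ : z₂ = y₂ := by
      apply mul_left_cancel₀ hAne
      rw [eq1, ← hz₁y] at *
      rw [hz₁y] at hz1 ⊢
      rw [hz1, eq1]
    exact Prod.ext hz₁y hz₂
  · intro w₁ w₂ hw1 hw2
    constructor
    · have : IsUnit (w₁ * w₂ ^ p) := hw2 ▸ c₁.isUnit
      exact isUnit_of_mul_isUnit_left this
    · have : IsUnit (((a0 : R) + X ^ m * w₁ ^ p) * w₂) := hw1 ▸ c₂.isUnit
      exact isUnit_of_mul_isUnit_right this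
end

section
/- Let R be a commutative ring, π ∈ R, and f : M → N a map of R-modules. Assume (i) M is π-adically complete and separated, (ii) N has no π-torsion and is π-adically separated (⋂_{k≥1} π^k N = 0), and (iii) the induced map M/πM → N/πN is an isomorphism. Then f : M → N is an isomorphism. -/
lemma mem_pow_span_smul_top {R : Type*} [CommRing R] (π : R)
    {M : Type*} [AddCommGroup M] [Module R M] (k : ℕ) (x : M) :
    x ∈ ((Ideal.span {π}) ^ k • ⊤ : Submodule R M) ↔ ∃ y, x = π ^ k • y := by
  rw [Ideal.span_singleton_pow]
  constructor
  · intro hx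
    refine Submodule.smul_induction_on hx ?_ ?_
    · rintro r hr n -
      obtain ⟨c, rfl⟩ := Ideal.mem_span_singleton.mp hr
      exact ⟨c • n, by rw [mul_smul]⟩
    · rintro a b ⟨y, rfl⟩ ⟨z, rfl⟩
      exact ⟨y + z, by rw [smul_add]⟩
  · rintro ⟨y, rfl⟩
    exact Submodule.smul_mem_smul (Ideal.mem_span_singleton_self _) Submodule.mem_top

/-- If `M` is `π`-adically complete and separated, `N` is `π`-torsion free and
`π`-adically separated, and the induced map `M/πM → N/πN` is an isomorphism,
then `f : M → N` is an isomorphism. -/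
theorem stmt_11 {R : Type*} [CommRing R] (π : R)
    {M N : Type*} [AddCommGroup M] [Module R M] [AddCommGroup N] [Module R N]
    (f : M →ₗ[R] N)
    (hM : IsAdicComplete (Ideal.span {π}) M)
    (h1 : ∀ n : N, π • n = 0 → n = 0)
    (h2 : ∀ n : N, (∀ k : ℕ, ∃ n' : N, n = π ^ k • n') → n = 0)
    (h3inj : ∀ m : M, (∃ n' : N, f m = π • n') → ∃ m' : M, m = π • m')
    (h3surj : ∀ n : N, ∃ m : M, ∃ n' : N, n = f m + π • n') :
    Function.Bijective f := by
  have h1' : ∀ (k : ℕ) (n : N), π ^ k • n = 0 → n = 0 := by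
    intro k
    induction k with
    | zero => intro n hn; simpa using hn
    | succ k ih =>
      intro n hn
      rw [pow_succ, mul_smul] at hn
      exact h1 n (ih _ hn)
  constructor
  · -- injectivity
    rw [injective_iff_map_eq_zero]
    intro m hm
    have hdiv : ∀ k : ℕ, ∃ y : M, m = π ^ k • y := by
      intro k
      induction k with
      | zero => exact ⟨m, by simp⟩
      | succ k ih =>
        obtain ⟨y, rfl⟩ := ih
        have hfy : f y = 0 := by
          apply h1' k
          rw [← map_smul, hm]
        obtain ⟨y', rfl⟩ := h3inj y ⟨0, by rw [hfy, smul_zero]⟩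
        exact ⟨y', by rw [pow_succ, mul_smul]⟩
    refine hM.toIsHausdorff.haus m fun k => SModEq.zero.mpr ?_
    exact (mem_pow_span_smul_top π k m).mpr (hdiv k)
  · -- surjectivity
    intro n
    have H : ∀ nn : N, ∃ p : M × N, nn = f p.1 + π • p.2 := fun nn => by
      obtain ⟨m, n', h⟩ := h3surj nn; exact ⟨(m, n'), h⟩
    choose step hstep using H
    let ns : ℕ → N := fun k => Nat.rec n (fun _ prev => (step prev).2) k
    let a : ℕ → M := fun k => (step (ns k)).1
    have hns : ∀ k, ns k = f (a k) + π • ns (k + 1) := fun k => hstep (ns k)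
    set s : ℕ → M := fun k => ∑ i ∈ Finset.range k, π ^ i • a i with hs
    have hkey : ∀ k, n = f (s k) + π ^ k • ns k := by
      intro k
      induction k with
      | zero => simp [hs, ns]
      | succ k ih =>
        rw [ih, hns k]
        simp only [hs, Finset.sum_range_succ, map_add, map_smul, smul_add,
          pow_succ, mul_smul]
        abel
    have hcauchy : ∀ {p q : ℕ}, p ≤ q →
        s p ≡ s q [SMOD ((Ideal.span {π}) ^ p • ⊤ : Submodule R M)] := by
      intro p q hpq
      rw [SModEq.sub_mem]
      have : s p - s q = -∑ i ∈ Finset.Ico p q, π ^ i • a i := by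
        rw [hs]
        simp only [neg_sub, ← Finset.sum_range_add_sum_Ico _ hpq]
        abel
      rw [this]
      refine neg_mem (Submodule.sum_mem _ fun i hi => ?_)
      rw [mem_pow_span_smul_top]
      refine ⟨π ^ (i - p) • a i, ?_⟩
      rw [← mul_smul, ← pow_add, Nat.add_sub_cancel' (Finset.mem_Ico.mp hi).1]
    obtain ⟨L, hL⟩ := hM.toIsPrecomplete.prec fun {p q} h => hcauchy h
    refine ⟨L, ?_⟩
    have : n - f L = 0 := by
      apply h2
      intro k
      obtain ⟨y, hy⟩ := (mem_pow_span_smul_top π k _).mp (SModEq.sub_mem.mp (hL k))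
      refine ⟨f y + ns k, ?_⟩
      rw [hkey k, smul_add, ← map_smul, ← hy]
      simp only [map_sub]
      abel
    exact (sub_eq_zero.mp this).symm
end
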